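/- The divergence ∇: Der(T(V*)) → DR⁰(V) ⊗ DR⁰(V) defined in coordinates by ∇((f₁⋯f_k)∂_{xᵢ}) := Σᵢ (−1)^{|xᵢ|(|fᵢ|+…+|f_k|)} ∂_{xᵢ}(fᵢ)·[(f₁⋯f_{i−1}) ⊗ (f_{i+1}⋯f_k)] is independent of the choice of homogeneous basis (coordinates) of V*. -/

import Mathlib

noncomputable section

/-!
STATEMENT 7: The divergence ∇ : Der(T(V*)) → DR⁰(V) ⊗ DR⁰(V), defined in coordinates by
∇((f₁⋯f_k)∂_{xᵢ}) := Σⱼ (−1)^{|xᵢ|(|fⱼ|+…+|f_k|)} ∂_{xᵢ}(fⱼ)·[(f₁⋯f_{j−1}) ⊗ (f_{j+1}⋯f_k)],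
is independent of the choice of homogeneous basis (coordinates) of V*.

Here `M` plays the role of V* with parity decomposition given by the submodules `G z`
(with G 0 ∩ G 1 = 0); a choice of coordinates is a homogeneous basis `b` (with parities
`pb`) of `M`, identifying T(V*) = TensorAlgebra ℚ M with the free algebra `FA n` via
`TensorAlgebra.equivFreeAlgebra b`.  A derivation of T(V*) is determined by its
restriction `u : M → TensorAlgebra ℚ M` to the generators; its divergence in the
coordinates `b` is computed by the coordinate formula (⋆) (the map `divg` below) applied
to the coordinate expression of `u`, and transported back to TensorAlgebra ℚ M.  The
space DR⁰(V) is defined basis-independently as the quotient of T(V*) by the span `CM` of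
graded commutators of products of homogeneous generators.  The theorem: for two
homogeneous bases the results agree in DR⁰(V) ⊗ DR⁰(V).
-/


open scoped TensorProduct

/-- The sign (−1)^z for a parity z ∈ ℤ/2. -/
def sgn (z : ZMod 2) : ℚ := (-1 : ℚ) ^ z.val

/-- The free (tensor) algebra T(V*) on homogeneous coordinates x₁,…,xₙ. -/
abbrev FA (n : ℕ) := FreeAlgebra ℚ (Fin n)

/-- The basis of words (noncommutative monomials) of T(V*). -/
def bas (n : ℕ) : Module.Basis (FreeMonoid (Fin n)) ℚ (FA n) := FreeAlgebra.basisFreeMonoid ℚ (Fin n)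

/-- The monomial associated to a word. -/
def mono {n : ℕ} (w : List (Fin n)) : FA n := bas n (FreeMonoid.ofList w)

/-- The parity of a word. -/
def wpar {n : ℕ} (p : Fin n → ZMod 2) (w : List (Fin n)) : ZMod 2 := (w.map p).sum

/-- Extend a function on words to a linear map on T(V*). -/
def mk1 {n : ℕ} {M : Type} [AddCommGroup M] [Module ℚ M] (F : List (Fin n) → M) :
    FA n →ₗ[ℚ] M :=
  (bas n).constr ℚ (fun w => F (FreeMonoid.toList w))

/-- Extend a function on pairs of words to a bilinear map on T(V*). -/
def mk2 {n : ℕ} {M : Type} [AddCommGroup M] [Module ℚ M] (F : List (Fin n) → List (Fin n) → M) :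
    FA n →ₗ[ℚ] FA n →ₗ[ℚ] M :=
  (bas n).constr ℚ (fun w => mk1 (F (FreeMonoid.toList w)))

/-- The parity-z graded piece of T(V*): the span of the words of parity z. -/
def Gpart {n : ℕ} (p : Fin n → ZMod 2) (z : ZMod 2) : Submodule ℚ (FA n) :=
  Submodule.span ℚ {x | ∃ w : List (Fin n), wpar p w = z ∧ x = mono w}

/-- The submodule of graded commutators [T(V*),T(V*)]; the quotient by it is the space
DR⁰(V) of noncommutative 0-forms (cyclic words). -/
def Csub {n : ℕ} (p : Fin n → ZMod 2) : Submodule ℚ (FA n) :=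
  Submodule.span ℚ
    {x | ∃ u v : List (Fin n), x = mono (u ++ v) - sgn (wpar p u * wpar p v) • mono (v ++ u)}

/-- The graded derivation (noncommutative vector field) ξ = Σᵢ gᵢ ∂_{xᵢ} of parity `q`
with generator values `g`, as a linear endomorphism of T(V*):
ξ(l₁⋯l_k) = Σⱼ (−1)^{q(|l₁|+…+|l_{j−1}|)} l₁⋯l_{j−1}·g(lⱼ)·l_{j+1}⋯l_k. -/
def der {n : ℕ} (p : Fin n → ZMod 2) (q : ZMod 2) (g : Fin n → FA n) : FA n →ₗ[ℚ] FA n :=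
  mk1 (fun w => ∑ j : Fin w.length,
    sgn (q * wpar p (w.take j.val)) •
      (mono (w.take j.val) * g (w.get j) * mono (w.drop (j.val + 1))))

/-- The divergence of the noncommutative vector field Σᵢ gᵢ ∂_{xᵢ}, computed on
representatives in T(V*) ⊗ T(V*) by formula (⋆):
∇((f₁⋯f_k)∂_{xᵢ}) = Σⱼ (−1)^{|xᵢ|(|fⱼ|+…+|f_k|)} ∂_{xᵢ}(fⱼ)·[(f₁⋯f_{j−1}) ⊗ (f_{j+1}⋯f_k)]. -/
def divg {n : ℕ} (p : Fin n → ZMod 2) (g : Fin n → FA n) :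
    TensorProduct ℚ (FA n) (FA n) :=
  ∑ i : Fin n,
    (mk1 (fun w => ∑ j : Fin w.length,
      if w.get j = i then
        sgn (p i * wpar p (w.drop j.val)) •
          (mono (w.take j.val) ⊗ₜ[ℚ] mono (w.drop (j.val + 1)))
      else 0)) (g i)

/-- L_ξ ⊗ 1 on T(V*) ⊗ T(V*). -/
def opL {n : ℕ} (p : Fin n → ZMod 2) (q : ZMod 2) (g : Fin n → FA n) :
    TensorProduct ℚ (FA n) (FA n) →ₗ[ℚ] TensorProduct ℚ (FA n) (FA n) :=
  TensorProduct.lift (mk2 (fun w₁ w₂ => (der p q g (mono w₁)) ⊗ₜ[ℚ] mono w₂))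

/-- 1 ⊗ L_ξ on T(V*) ⊗ T(V*), with the Koszul sign (−1)^{|ξ||first factor|}. -/
def opR {n : ℕ} (p : Fin n → ZMod 2) (q : ZMod 2) (g : Fin n → FA n) :
    TensorProduct ℚ (FA n) (FA n) →ₗ[ℚ] TensorProduct ℚ (FA n) (FA n) :=
  TensorProduct.lift (mk2 (fun w₁ w₂ =>
    sgn (q * wpar p w₁) • (mono w₁ ⊗ₜ[ℚ] der p q g (mono w₂))))

/-- The parity-z part of the tensor algebra on `M`, spanned by products of homogeneous
generators of total parity z (relative to the grading `G` of `M`). -/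
def Tpar (M : Type) [AddCommGroup M] [Module ℚ M] (G : ZMod 2 → Submodule ℚ M)
    (z : ZMod 2) : Submodule ℚ (TensorAlgebra ℚ M) :=
  Submodule.span ℚ
    {x | ∃ l : List (M × ZMod 2), (∀ q ∈ l, q.1 ∈ G q.2) ∧ (l.map Prod.snd).sum = z ∧
      x = (l.map (fun q => TensorAlgebra.ι ℚ q.1)).prod}

/-- The span of graded commutators in the tensor algebra on `M`; the quotient by it is
DR⁰(V), defined without reference to a basis. -/
def CM (M : Type) [AddCommGroup M] [Module ℚ M] (G : ZMod 2 → Submodule ℚ M) :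
    Submodule ℚ (TensorAlgebra ℚ M) :=
  Submodule.span ℚ
    {x | ∃ (za zb : ZMod 2) (a b : TensorAlgebra ℚ M),
      a ∈ Tpar M G za ∧ b ∈ Tpar M G zb ∧ x = a * b - sgn (za * zb) • (b * a)}


/-!
The formula gives a basis-independent element already in T(V*) ⊗ T(V*). In the coordinates of a
homogeneous basis it is Σᵢ ⟨xᵢ^∨, d(ξ xᵢ)⟩, where d : T(V*) → (T(V*) ⊗ T(V*)) ⊗ V* is the
coordinate double derivative, cutting a word at one letter and keeping that letter in the last
factor. Contracting a fixed linear map V* → (T ⊗ T) ⊗ V* against a basis and its dual basis does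
not depend on the basis. Nor does d: in every homogeneous basis it obeys the graded Leibniz rule
  d(m·t) = (−1)^{|m|(|m|+|t|)} (1 ⊗ t) ⊗ m + (m ⊗ 1)·d(t)
for homogeneous m ∈ V* and homogeneous t, and products of homogeneous vectors span T(V*).
The rule is a computation for basis vectors m, and reaches every homogeneous m because, as
G 0 ∩ G 1 = 0, a homogeneous vector only involves basis vectors of its own parity.
-/

open TensorProduct

section Words

variable {n : ℕ}

lemma mono_eq_single (w : List (Fin n)) :
    mono w = FreeAlgebra.equivMonoidAlgebraFreeMonoid.symm
      (MonoidAlgebra.single (FreeMonoid.ofList w) (1 : ℚ)) := by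
  simp [mono, bas, FreeAlgebra.basisFreeMonoid]

lemma mono_append (u v : List (Fin n)) : mono (u ++ v) = mono u * mono v := by
  rw [mono_eq_single, mono_eq_single, mono_eq_single, ← map_mul, MonoidAlgebra.single_mul_single,
    one_mul, FreeMonoid.ofList_append]

lemma mono_nil : mono ([] : List (Fin n)) = 1 := by
  rw [mono_eq_single]
  exact map_one _

lemma mono_singleton (i : Fin n) : mono [i] = FreeAlgebra.ι ℚ i := by
  rw [mono_eq_single, AlgEquiv.symm_apply_eq]
  simp [FreeAlgebra.equivMonoidAlgebraFreeMonoid]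

lemma mono_cons (i : Fin n) (w : List (Fin n)) :
    mono (i :: w) = FreeAlgebra.ι ℚ i * mono w := by
  rw [← mono_singleton, ← mono_append, List.singleton_append]

lemma mk1_mono {X : Type} [AddCommGroup X] [Module ℚ X] (F : List (Fin n) → X)
    (w : List (Fin n)) : mk1 F (mono w) = F w := by
  rw [mk1, mono, Module.Basis.constr_basis, FreeMonoid.toList_ofList]

lemma bas_apply (w : FreeMonoid (Fin n)) : bas n w = mono (FreeMonoid.toList w) := by
  rw [mono, FreeMonoid.ofList_toList]

lemma wpar_append (p : Fin n → ZMod 2) (u v : List (Fin n)) :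
    wpar p (u ++ v) = wpar p u + wpar p v := by
  simp [wpar]

lemma mul_mem_Gpart (p : Fin n → ZMod 2) {z₁ z₂ : ZMod 2} {x y : FA n}
    (hx : x ∈ Gpart p z₁) (hy : y ∈ Gpart p z₂) : x * y ∈ Gpart p (z₁ + z₂) := by
  suffices Gpart p z₁ * Gpart p z₂ ≤ Gpart p (z₁ + z₂) from this (Submodule.mul_mem_mul hx hy)
  rw [Gpart, Gpart, Submodule.span_mul_span, Submodule.span_le]
  rintro _ ⟨_, ⟨u, rfl, rfl⟩, _, ⟨v, rfl, rfl⟩, rfl⟩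
  exact Submodule.subset_span ⟨u ++ v, wpar_append p u v, (mono_append u v).symm⟩

lemma ι_mem_Gpart (p : Fin n → ZMod 2) (i : Fin n) : FreeAlgebra.ι ℚ i ∈ Gpart p (p i) :=
  Submodule.subset_span ⟨[i], by simp [wpar], (mono_singleton i).symm⟩

end Words

section MulLeftFst

variable {A C N : Type} [Ring A] [Algebra ℚ A] [AddCommGroup C] [Module ℚ C]
  [AddCommGroup N] [Module ℚ N]

def mulLeftFst : A →ₗ[ℚ] Module.End ℚ ((A ⊗[ℚ] C) ⊗[ℚ] N) :=
  LinearMap.rTensorHom N ∘ₗ LinearMap.rTensorHom C ∘ₗ LinearMap.mul ℚ A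

@[simp]
lemma mulLeftFst_tmul (a x : A) (c : C) (m : N) :
    mulLeftFst a ((x ⊗ₜ[ℚ] c) ⊗ₜ[ℚ] m) = ((a * x) ⊗ₜ[ℚ] c) ⊗ₜ[ℚ] m :=
  rfl

lemma map_mulLeftFst {B : Type} [Ring B] [Algebra ℚ B] (φ : A ≃ₐ[ℚ] B) (a : A)
    (y : (A ⊗[ℚ] A) ⊗[ℚ] N) :
    map (map φ.toLinearMap φ.toLinearMap) LinearMap.id (mulLeftFst a y) =
      mulLeftFst (φ a) (map (map φ.toLinearMap φ.toLinearMap) LinearMap.id y) := by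
  rw [← LinearMap.comp_apply, ← LinearMap.comp_apply]
  congr 1
  exact TensorProduct.ext_threefold fun x c m => by simp

end MulLeftFst

section DoubleDeriv

variable {n : ℕ} {X : Type} [AddCommGroup X] [Module ℚ X]

def doubleDeriv (p : Fin n → ZMod 2) (v : Fin n → X) : FA n →ₗ[ℚ] (FA n ⊗[ℚ] FA n) ⊗[ℚ] X :=
  mk1 fun w => ∑ j : Fin w.length,
    sgn (p (w.get j) * wpar p (w.drop j)) •
      ((mono (w.take j) ⊗ₜ[ℚ] mono (w.drop (j + 1))) ⊗ₜ[ℚ] v (w.get j))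

variable (p : Fin n → ZMod 2) (v : Fin n → X)

lemma doubleDeriv_one : doubleDeriv p v 1 = 0 := by
  rw [← mono_nil, doubleDeriv, mk1_mono]
  rfl

lemma doubleDeriv_mono_cons (i : Fin n) (w : List (Fin n)) :
    doubleDeriv p v (mono (i :: w)) =
      sgn (p i * (p i + wpar p w)) • ((1 ⊗ₜ[ℚ] mono w) ⊗ₜ[ℚ] v i) +
        mulLeftFst (FreeAlgebra.ι ℚ i) (doubleDeriv p v (mono w)) := by
  rw [doubleDeriv, mk1_mono, mk1_mono]
  erw [Fin.sum_univ_succ (n := w.length)]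
  rw [map_sum]
  congr 1
  · simp [wpar, mono_nil]
  · refine Finset.sum_congr rfl fun j _ => ?_
    simp [mono_cons]

lemma doubleDeriv_ι_mul {z : ZMod 2} (i : Fin n) {y : FA n} (hy : y ∈ Gpart p z) :
    doubleDeriv p v (FreeAlgebra.ι ℚ i * y) =
      sgn (p i * (p i + z)) • ((1 ⊗ₜ[ℚ] y) ⊗ₜ[ℚ] v i) +
        mulLeftFst (FreeAlgebra.ι ℚ i) (doubleDeriv p v y) := by
  induction hy using Submodule.span_induction with
  | mem _ hw =>
    obtain ⟨w, rfl, rfl⟩ := hw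
    rw [← mono_cons, doubleDeriv_mono_cons]
  | zero => simp
  | add y₁ y₂ _ _ h₁ h₂ =>
    rw [mul_add, map_add, h₁, h₂, tmul_add, add_tmul, smul_add, map_add, map_add]
    abel
  | smul c y _ h =>
    rw [mul_smul_comm, map_smul, h, tmul_smul, ← smul_tmul', smul_add, map_smul, map_smul,
      smul_comm c]

end DoubleDeriv

section BasisDoubleDeriv

variable {M : Type} [AddCommGroup M] [Module ℚ M] {G : ZMod 2 → Submodule ℚ M}
  {n : ℕ} {b : Module.Basis (Fin n) ℚ M} {pb : Fin n → ZMod 2}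

lemma mem_span_basis_of_mem (hdisj : G 0 ⊓ G 1 = ⊥) (hb : ∀ i, b i ∈ G (pb i)) {z : ZMod 2}
    {m : M} (hm : m ∈ G z) : m ∈ Submodule.span ℚ (b '' {i | pb i = z}) := by
  have hdisj' : G z ⊓ G (z + 1) = ⊥ := by
    obtain rfl | rfl := (by decide : ∀ y : ZMod 2, y = 0 ∨ y = 1) z
    exacts [hdisj, by rw [inf_comm, show (1 : ZMod 2) + 1 = 0 from rfl]; exact hdisj]
  have hle : Submodule.span ℚ (b '' {i | pb i = z}ᶜ) ≤ G (z + 1) := by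
    refine Submodule.span_le.2 ?_
    rintro _ ⟨i, hi, rfl⟩
    have hpar : pb i = z + 1 := (by decide : ∀ y z : ZMod 2, y ≠ z → y = z + 1) _ _ hi
    exact hpar ▸ hb i
  have htop : m ∈ Submodule.span ℚ (b '' {i | pb i = z}) ⊔
      Submodule.span ℚ (b '' {i | pb i = z}ᶜ) := by
    rw [← Submodule.span_union, ← Set.image_union, Set.union_compl_self, Set.image_univ,
      b.span_eq]
    trivial
  obtain ⟨s, hs, t, ht, rfl⟩ := Submodule.mem_sup.1 htop
  have hsG : s ∈ G z := Submodule.span_le.2 (by rintro _ ⟨i, hi, rfl⟩; exact hi ▸ hb i) hs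
  have ht0 : t = 0 := by
    rw [← Submodule.mem_bot ℚ, ← hdisj']
    exact ⟨by simpa using sub_mem hm hsG, hle ht⟩
  rwa [ht0, add_zero]

lemma equivFreeAlgebra_ι_mem_Gpart (hdisj : G 0 ⊓ G 1 = ⊥) (hb : ∀ i, b i ∈ G (pb i))
    {z : ZMod 2} {m : M} (hm : m ∈ G z) :
    TensorAlgebra.equivFreeAlgebra b (TensorAlgebra.ι ℚ m) ∈ Gpart pb z := by
  refine (Submodule.span_le (p := (Gpart pb z).comap
    ((TensorAlgebra.equivFreeAlgebra b).toLinearMap ∘ₗ TensorAlgebra.ι ℚ))).2 ?_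
    (mem_span_basis_of_mem hdisj hb hm)
  rintro _ ⟨i, rfl, rfl⟩
  simpa using ι_mem_Gpart pb i

lemma equivFreeAlgebra_mem_Gpart (hdisj : G 0 ⊓ G 1 = ⊥) (hb : ∀ i, b i ∈ G (pb i))
    {z : ZMod 2} {t : TensorAlgebra ℚ M} (ht : t ∈ Tpar M G z) :
    TensorAlgebra.equivFreeAlgebra b t ∈ Gpart pb z := by
  refine (Submodule.span_le (p := (Gpart pb z).comap
    (TensorAlgebra.equivFreeAlgebra b).toLinearMap)).2 ?_ ht
  rintro _ ⟨l, hl, rfl, rfl⟩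
  clear ht
  induction l with
  | nil => exact Submodule.subset_span ⟨[], rfl, by simp [mono_nil]⟩
  | cons q l ih =>
    simpa using mul_mem_Gpart pb (equivFreeAlgebra_ι_mem_Gpart hdisj hb (hl q (by simp)))
      (ih fun q' hq' => hl q' (List.mem_cons_of_mem q hq'))

lemma equivFreeAlgebra_symm_mono (w : List (Fin n)) :
    (TensorAlgebra.equivFreeAlgebra b).symm (mono w) =
      ((w.map fun i => (b i, pb i)).map fun q => TensorAlgebra.ι ℚ q.1).prod := by
  induction w with
  | nil => simp [mono_nil]
  | cons i w ih => simp [mono_cons, ih]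

variable (b pb) in
def basisDoubleDeriv :
    TensorAlgebra ℚ M →ₗ[ℚ] (TensorAlgebra ℚ M ⊗[ℚ] TensorAlgebra ℚ M) ⊗[ℚ] M :=
  map (map (TensorAlgebra.equivFreeAlgebra b).symm.toLinearMap
      (TensorAlgebra.equivFreeAlgebra b).symm.toLinearMap) LinearMap.id ∘ₗ
    doubleDeriv pb b ∘ₗ (TensorAlgebra.equivFreeAlgebra b).toLinearMap

lemma basisDoubleDeriv_one : basisDoubleDeriv b pb 1 = 0 := by
  simp [basisDoubleDeriv, doubleDeriv_one]

lemma basisDoubleDeriv_ι_basis_mul (i : Fin n) {z : ZMod 2} {t : TensorAlgebra ℚ M}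
    (ht : TensorAlgebra.equivFreeAlgebra b t ∈ Gpart pb z) :
    basisDoubleDeriv b pb (TensorAlgebra.ι ℚ (b i) * t) =
      sgn (pb i * (pb i + z)) • ((1 ⊗ₜ[ℚ] t) ⊗ₜ[ℚ] b i) +
        mulLeftFst (TensorAlgebra.ι ℚ (b i)) (basisDoubleDeriv b pb t) := by
  simp only [basisDoubleDeriv, LinearMap.comp_apply, AlgEquiv.toLinearMap_apply, map_mul,
    TensorAlgebra.equivFreeAlgebra_ι_apply, doubleDeriv_ι_mul pb b i ht, map_add, map_smul,
    map_tmul, map_one, AlgEquiv.symm_apply_apply, LinearMap.id_apply, map_mulLeftFst,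
    TensorAlgebra.equivFreeAlgebra_symm_ι]

lemma basisDoubleDeriv_ι_mul (hdisj : G 0 ⊓ G 1 = ⊥) (hb : ∀ i, b i ∈ G (pb i))
    {z ζ : ZMod 2} {m : M} (hm : m ∈ G z) {t : TensorAlgebra ℚ M} (ht : t ∈ Tpar M G ζ) :
    basisDoubleDeriv b pb (TensorAlgebra.ι ℚ m * t) =
      sgn (z * (z + ζ)) • ((1 ⊗ₜ[ℚ] t) ⊗ₜ[ℚ] m) +
        mulLeftFst (TensorAlgebra.ι ℚ m) (basisDoubleDeriv b pb t) := by
  have hspan := mem_span_basis_of_mem hdisj hb hm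
  clear hm
  induction hspan using Submodule.span_induction with
  | mem _ hi =>
    obtain ⟨i, rfl, rfl⟩ := hi
    exact basisDoubleDeriv_ι_basis_mul i (equivFreeAlgebra_mem_Gpart hdisj hb ht)
  | zero => simp
  | add m₁ m₂ _ _ h₁ h₂ =>
    rw [map_add, add_mul, map_add, h₁, h₂, tmul_add, smul_add, map_add, LinearMap.add_apply]
    abel
  | smul c m _ h =>
    rw [map_smul, smul_mul_assoc, map_smul, h, tmul_smul, smul_add, map_smul,
      LinearMap.smul_apply, smul_comm]

lemma basisDoubleDeriv_list_prod_eq (hdisj : G 0 ⊓ G 1 = ⊥) {b' : Module.Basis (Fin n) ℚ M}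
    {pb' : Fin n → ZMod 2} (hb : ∀ i, b i ∈ G (pb i)) (hb' : ∀ i, b' i ∈ G (pb' i))
    (l : List (M × ZMod 2)) (hl : ∀ q ∈ l, q.1 ∈ G q.2) :
    basisDoubleDeriv b pb (l.map fun q => TensorAlgebra.ι ℚ q.1).prod =
      basisDoubleDeriv b' pb' (l.map fun q => TensorAlgebra.ι ℚ q.1).prod := by
  induction l with
  | nil => simp [basisDoubleDeriv_one]
  | cons q l ih =>
    have hl' : ∀ q' ∈ l, q'.1 ∈ G q'.2 := fun q' hq' => hl q' (List.mem_cons_of_mem q hq')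
    have ht : (l.map fun q => TensorAlgebra.ι ℚ q.1).prod ∈ Tpar M G (l.map Prod.snd).sum :=
      Submodule.subset_span ⟨l, hl', rfl, rfl⟩
    simp only [List.map_cons, List.prod_cons, basisDoubleDeriv_ι_mul hdisj hb (hl q (by simp)) ht,
      basisDoubleDeriv_ι_mul hdisj hb' (hl q (by simp)) ht, ih hl']

lemma basisDoubleDeriv_eq (hdisj : G 0 ⊓ G 1 = ⊥) {b' : Module.Basis (Fin n) ℚ M}
    {pb' : Fin n → ZMod 2} (hb : ∀ i, b i ∈ G (pb i)) (hb' : ∀ i, b' i ∈ G (pb' i)) :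
    basisDoubleDeriv b pb = basisDoubleDeriv b' pb' := by
  refine ((bas n).map (TensorAlgebra.equivFreeAlgebra b).symm.toLinearEquiv).ext fun w => ?_
  rw [Module.Basis.map_apply, AlgEquiv.toLinearEquiv_apply, bas_apply, equivFreeAlgebra_symm_mono]
  exact basisDoubleDeriv_list_prod_eq hdisj hb hb' _ (by simpa using fun i _ => hb i)

end BasisDoubleDeriv

section Contraction

variable {X N : Type} [AddCommGroup X] [Module ℚ X] [AddCommGroup N] [Module ℚ N]

def contractSnd (φ : N →ₗ[ℚ] ℚ) : X ⊗[ℚ] N →ₗ[ℚ] X :=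
  (TensorProduct.rid ℚ X).toLinearMap ∘ₗ φ.lTensor X

@[simp]
lemma contractSnd_tmul (φ : N →ₗ[ℚ] ℚ) (x : X) (m : N) :
    contractSnd φ (x ⊗ₜ[ℚ] m) = φ m • x := by
  simp [contractSnd]

lemma comp_contractSnd {Y : Type} [AddCommGroup Y] [Module ℚ Y] (φ : N →ₗ[ℚ] ℚ)
    (A : X →ₗ[ℚ] Y) : A ∘ₗ contractSnd φ = contractSnd φ ∘ₗ map A LinearMap.id :=
  TensorProduct.ext' fun x m => by simp

lemma contractSnd_sum {ι : Type} (s : Finset ι) (c : ι → ℚ) (φ : ι → N →ₗ[ℚ] ℚ)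
    (t : X ⊗[ℚ] N) :
    contractSnd (∑ i ∈ s, c i • φ i) t = ∑ i ∈ s, c i • contractSnd (φ i) t := by
  induction t using TensorProduct.induction_on with
  | zero => simp
  | tmul x m => simp [Finset.sum_smul, smul_smul]
  | add x y hx hy => simp [hx, hy, Finset.sum_add_distrib]

lemma sum_contractSnd_coord_eq {ι ι' : Type} [Fintype ι] [Fintype ι']
    (b : Module.Basis ι ℚ N) (b' : Module.Basis ι' ℚ N) (L : N →ₗ[ℚ] X ⊗[ℚ] N) :
    ∑ i, contractSnd (b.coord i) (L (b i)) = ∑ i, contractSnd (b'.coord i) (L (b' i)) := by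
  have hcoord : ∀ j, b.coord j = ∑ i, b.repr (b' i) j • b'.coord i := fun j =>
    b'.ext fun k => by classical simp [Finsupp.single_apply]
  calc ∑ j, contractSnd (b.coord j) (L (b j))
      = ∑ j, ∑ i, b.repr (b' i) j • contractSnd (b'.coord i) (L (b j)) := by
        simp only [hcoord, contractSnd_sum]
    _ = ∑ i, ∑ j, b.repr (b' i) j • contractSnd (b'.coord i) (L (b j)) := Finset.sum_comm
    _ = ∑ i, contractSnd (b'.coord i) (L (b' i)) := by
        refine Finset.sum_congr rfl fun i _ => ?_
        conv_rhs => rw [← b.sum_repr (b' i), map_sum, map_sum]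
        simp only [map_smul]

end Contraction

lemma divg_eq_sum_contractSnd {n : ℕ} {M : Type} [AddCommGroup M] [Module ℚ M]
    (p : Fin n → ZMod 2) (b : Module.Basis (Fin n) ℚ M) (g : Fin n → FA n) :
    divg p g = ∑ i, contractSnd (b.coord i) (doubleDeriv p b (g i)) := by
  refine Finset.sum_congr rfl fun i _ => ?_
  rw [← LinearMap.comp_apply]
  congr 1
  refine (bas n).ext fun w => ?_
  rw [bas_apply, LinearMap.comp_apply, doubleDeriv, mk1_mono, mk1_mono, map_sum]
  refine Finset.sum_congr rfl fun j _ => ?_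
  simp only [map_smul, contractSnd_tmul, Module.Basis.coord_apply, Module.Basis.repr_self]
  split_ifs with h
  · rw [h, Finsupp.single_eq_same, one_smul]
  · rw [Finsupp.single_eq_of_ne (Ne.symm h), zero_smul, smul_zero]

lemma map_divg_equivFreeAlgebra {n : ℕ} {M : Type} [AddCommGroup M] [Module ℚ M]
    (b : Module.Basis (Fin n) ℚ M) (pb : Fin n → ZMod 2) (f : Fin n → TensorAlgebra ℚ M) :
    map (TensorAlgebra.equivFreeAlgebra b).symm.toLinearMap
        (TensorAlgebra.equivFreeAlgebra b).symm.toLinearMap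
        (divg pb fun i => TensorAlgebra.equivFreeAlgebra b (f i)) =
      ∑ i, contractSnd (b.coord i) (basisDoubleDeriv b pb (f i)) := by
  rw [divg_eq_sum_contractSnd pb b, map_sum]
  refine Finset.sum_congr rfl fun i _ => ?_
  rw [← LinearMap.comp_apply, comp_contractSnd, LinearMap.comp_apply]
  rfl

theorem divergence_is_basis_independent
    (M : Type) [AddCommGroup M] [Module ℚ M]
    (G : ZMod 2 → Submodule ℚ M) (hdisj : G 0 ⊓ G 1 = ⊥)
    (n : ℕ) (b b' : Module.Basis (Fin n) ℚ M) (pb pb' : Fin n → ZMod 2)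
    (hb : ∀ i, b i ∈ G (pb i)) (hb' : ∀ i, b' i ∈ G (pb' i))
    (u : M →ₗ[ℚ] TensorAlgebra ℚ M) :
    ∀ (e e' : TensorAlgebra ℚ M ≃ₐ[ℚ] FA n),
      e = TensorAlgebra.equivFreeAlgebra b →
      e' = TensorAlgebra.equivFreeAlgebra b' →
      (TensorProduct.map (CM M G).mkQ (CM M G).mkQ)
          ((TensorProduct.map e.symm.toLinearMap e.symm.toLinearMap)
            (divg pb (fun i => e (u (b i)))))
        = (TensorProduct.map (CM M G).mkQ (CM M G).mkQ)
            ((TensorProduct.map e'.symm.toLinearMap e'.symm.toLinearMap)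
              (divg pb' (fun i => e' (u (b' i))))) := by
  rintro e e' rfl rfl
  congr 1
  rw [map_divg_equivFreeAlgebra, map_divg_equivFreeAlgebra, basisDoubleDeriv_eq hdisj hb hb']
  exact sum_contractSnd_coord_eq b b' (basisDoubleDeriv b' pb' ∘ₗ u)

end
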